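/- arXiv:2312.17710 — 2 statements merged into one kernel-verified Lean document; each statement's English description precedes it below -/
import Mathlib

section
/- Let π(x) ∝ exp(xᵀAx + bᵀx) be a discrete log-quadratic distribution on a finite set X ⊂ ℝ^d with A symmetric, and for α > 0 define the proposal q_α(x'|x) = (1/Z_α(x)) exp(−½(U(x')−U(x)) − ½(x'−x)ᵀA(x'−x) − (1/2α)‖x'−x‖_p^p), where U(x) = −xᵀAx − bᵀx and Z_α(x) is the normalizing constant. Then the distribution π_α(x) ∝ Z_α(x)π(x) satisfies detailed balance with respect to q_α: π_α(x)q_α(x'|x) = π_α(x')q_α(x|x') for all x, x' ∈ X. -/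
open Matrix Real

noncomputable section

/-- `‖v‖_p^p = ∑ i |v i|^p`. -/
def pNormPow {d : ℕ} (p : ℝ) (v : Fin d → ℝ) : ℝ := ∑ i, |v i| ^ p

/-- Detailed balance of the p-NCG proposal with respect to `pialpha ∝ Z_α(x) pi(x)` on a
discrete log-quadratic distribution. The finite set `X ⊂ ℝ^d` is given as the image of
an injective map `emb : ι → ℝ^d` from a finite index type. -/
theorem pNCG_detailed_balance
    {d : ℕ} {ι : Type*} [Fintype ι]
    (emb : ι → (Fin d → ℝ)) (hemb : Function.Injective emb)
    (A : Matrix (Fin d) (Fin d) ℝ) (hA : A.IsSymm) (b : Fin d → ℝ)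
    (p : ℝ) (hp : 1 ≤ p) (α : ℝ) (hα : 0 < α)
    (U : (Fin d → ℝ) → ℝ)
    (hU : ∀ v, U v = -(v ⬝ᵥ A.mulVec v) - b ⬝ᵥ v)
    -- the target distribution pi(x) ∝ exp(xᵀAx + bᵀx) = exp(-U(x))
    (pi : ι → ℝ)
    (hpi : ∀ x, pi x = exp (-U (emb x)) / ∑ y : ι, exp (-U (emb y)))
    -- normalizing constant Z_α(x)
    (Zα : ι → ℝ)
    (hZα : ∀ x, Zα x =
      ∑ y : ι, exp (-(1/2) * (U (emb y) - U (emb x))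
        - (1/2) * ((emb y - emb x) ⬝ᵥ A.mulVec (emb y - emb x))
        - (1/(2*α)) * pNormPow p (emb y - emb x)))
    -- the p-NCG proposal q_α(x'|x)
    (qα : ι → ι → ℝ)
    (hqα : ∀ x x', qα x x' =
      (1 / Zα x) * exp (-(1/2) * (U (emb x') - U (emb x))
        - (1/2) * ((emb x' - emb x) ⬝ᵥ A.mulVec (emb x' - emb x))
        - (1/(2*α)) * pNormPow p (emb x' - emb x)))
    -- the distribution pialpha(x) ∝ Z_α(x) pi(x)
    (pialpha : ι → ℝ)
    (hpialpha : ∀ x, pialpha x = Zα x * pi x / ∑ y : ι, Zα y * pi y) :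
    ∀ x x' : ι, pialpha x * qα x x' = pialpha x' * qα x' x := by
  intro x x'
  have hZpos : ∀ z : ι, 0 < Zα z := by
    intro z
    rw [hZα]
    exact Finset.sum_pos (fun y _ => exp_pos _) ⟨z, Finset.mem_univ z⟩
  have hsub : (emb x' - emb x) ⬝ᵥ A.mulVec (emb x' - emb x)
      = (emb x - emb x') ⬝ᵥ A.mulVec (emb x - emb x') := by
    rw [show emb x' - emb x = -(emb x - emb x') by abel, Matrix.mulVec_neg,
      dotProduct_neg, neg_dotProduct, neg_neg]
  have hnorm : pNormPow p (emb x' - emb x) = pNormPow p (emb x - emb x') := by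
    unfold pNormPow
    refine Finset.sum_congr rfl fun i _ => ?_
    simp [abs_sub_comm]
  rw [hpialpha, hpialpha, hqα, hqα, hpi, hpi, hsub, hnorm]
  have hZx := (hZpos x).ne'
  have hZx' := (hZpos x').ne'
  have expand : ∀ (Z e1 e2 T S : ℝ), Z ≠ 0 →
      Z * (e1 / T) / S * (1 / Z * e2) = e1 * e2 / (T * S) := by
    intro Z e1 e2 T S hZ
    rw [show Z * (e1 / T) / S * (1 / Z * e2) = Z * Z⁻¹ * (e1 * e2 / (T * S)) by ring,
      mul_inv_cancel₀ hZ, one_mul]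
  rw [expand _ _ _ _ _ hZx, expand _ _ _ _ _ hZx']
  congr 1
  rw [← exp_add, ← exp_add]
  congr 1
  ring

end
end

section
/- For the p-NCG proposal q_α on a discrete log-quadratic distribution over a finite set X of at least two distinct points, there exist constants c₁, c₂, Z > 0 depending only on the distribution such that the mixing time satisfies t_mix(ε) ≥ ((c₁/Z)·exp(c₂/(2α)) − 1)·log(1/(2ε)) for all ε ∈ (0, 1/2) and all α > 0. In particular, the mixing time grows exponentially as α → 0⁺. -/
/-!
Let `c` be the least `p`-distance `‖x - y‖_p^p` between distinct points and `β` a bound for the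
gradient term of the proposal. Every off-diagonal move then has weight at most `exp (β - c/(2α))`
against weight `1` for staying put, so the diagonal of `M α` is at least
`1 - (n - 1) exp (β - c/(2α))` and its trace is close to `n`. With `κ = exp (c/(2α)) / (n exp β)`
(so `c₁ = 1`, `c₂ = c`, `Z = n exp β`), the deflated matrix `M α - 𝟙 πᵀ` has the spectrum of `M α`
with one eigenvalue `1` replaced by `0`; averaging its remaining `n - 1` eigenvalues gives an
eigenvalue `λ ≠ 0` with `Re λ ≥ (tr M α - 1)/(n - 1) ≥ 1 - 1/κ`. Its eigenvector `v` is orthogonal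
to `π`, hence an eigenvector of `M α`, and evaluating `(M α)^t v = λ^t v` at the largest coordinate
of `v` gives `|λ|^t ≤ 2ε`. Taking logarithms, `(κ - 1) log (1/(2ε)) ≤ t`.
-/

open Matrix Real

noncomputable section

lemma pNormPow_zero {d : ℕ} {p : ℝ} (hp : p ≠ 0) : pNormPow p (0 : Fin d → ℝ) = 0 := by
  simp [pNormPow, Real.zero_rpow hp]

lemma pNormPow_pos {d : ℕ} (p : ℝ) {v : Fin d → ℝ} (hv : v ≠ 0) : 0 < pNormPow p v := by
  obtain ⟨i, hi⟩ := Function.ne_iff.mp hv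
  exact Finset.sum_pos' (fun j _ => by positivity)
    ⟨i, Finset.mem_univ i, Real.rpow_pos_of_pos (abs_pos.mpr hi) p⟩

lemma Finite.exists_pos_le_of_ne {ι : Type*} [Finite ι] [Nonempty ι] (f : ι → ι → ℝ)
    (hf : ∀ x y, x ≠ y → 0 < f x y) : ∃ c > 0, ∀ x y, x ≠ y → c ≤ f x y := by
  classical
  obtain ⟨q, hq⟩ := Finite.exists_min fun q : ι × ι => if q.1 = q.2 then 1 else f q.1 q.2
  refine ⟨_, ?_, fun x y hxy => by simpa [hxy] using hq (x, y)⟩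
  split_ifs with h
  · exact one_pos
  · exact hf _ _ h

lemma sum_exp_div_sum_exp {ι : Type*} [Fintype ι] [Nonempty ι] (E : ι → ℝ) :
    ∑ y, exp (E y) / ∑ y', exp (E y') = 1 := by
  rw [← Finset.sum_div, div_self (Finset.sum_pos (fun y _ => exp_pos _) Finset.univ_nonempty).ne']

lemma one_sub_mul_exp_le_exp_div_sum {ι : Type*} [Fintype ι] {E : ι → ℝ} {x : ι} {a : ℝ}
    (hx : E x = 0) (ha : ∀ y ≠ x, E y ≤ a) :
    1 - (Fintype.card ι - 1) * exp a ≤ exp (E x) / ∑ y, exp (E y) := by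
  classical
  set s := ∑ y ∈ Finset.univ.erase x, exp (E y)
  have hsum : ∑ y, exp (E y) = 1 + s := by
    rw [← Finset.add_sum_erase _ _ (Finset.mem_univ x), hx, exp_zero]
  have hs0 : 0 ≤ s := Finset.sum_nonneg fun y _ => (exp_pos _).le
  have hs : s ≤ (Fintype.card ι - 1) * exp a := by
    calc s ≤ (Finset.univ.erase x).card • exp a :=
          Finset.sum_le_card_nsmul _ _ _ fun y hy =>
            exp_le_exp.mpr (ha y (Finset.ne_of_mem_erase hy))
      _ = _ := by
          rw [nsmul_eq_mul, Finset.card_erase_of_mem (Finset.mem_univ x), Finset.card_univ,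
            Nat.cast_sub (Fintype.card_pos_iff.mpr ⟨x⟩), Nat.cast_one]
  rw [hx, exp_zero, hsum, le_div_iff₀ (by positivity)]
  nlinarith

lemma one_sub_mul_exp_le_pNCG_diag {d : ℕ} {ι : Type*} [Fintype ι] {emb : ι → (Fin d → ℝ)}
    {gU : (Fin d → ℝ) → (Fin d → ℝ)} {p α c β : ℝ} {x : ι} (hp : p ≠ 0) (hα : 0 < α)
    (hc : ∀ y ≠ x, c ≤ pNormPow p (emb y - emb x))
    (hβ : ∀ y, -(1/2) * (gU (emb x) ⬝ᵥ (emb y - emb x)) ≤ β) :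
    1 - (Fintype.card ι - 1) * exp (β - c / (2 * α)) ≤
      exp (-(1/2) * (gU (emb x) ⬝ᵥ (emb x - emb x)) - (1/(2*α)) * pNormPow p (emb x - emb x))
      / ∑ y : ι, exp (-(1/2) * (gU (emb x) ⬝ᵥ (emb y - emb x))
          - (1/(2*α)) * pNormPow p (emb y - emb x)) := by
  refine one_sub_mul_exp_le_exp_div_sum (E := fun y => -(1/2) * (gU (emb x) ⬝ᵥ (emb y - emb x))
    - (1/(2*α)) * pNormPow p (emb y - emb x)) (by simp [pNormPow_zero hp]) fun y hyx => ?_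
  have := mul_le_mul_of_nonneg_left (hc y hyx) (by positivity : 0 ≤ 1 / (2 * α))
  rw [div_eq_mul_one_div c, mul_comm c]
  linarith [hβ y]

lemma Multiset.exists_mem_sum_re_le_card_mul_re {s : Multiset ℂ} (hs : s ≠ 0) :
    ∃ z ∈ s, s.sum.re ≤ Multiset.card s * z.re := by
  classical
  obtain ⟨z, hz, hmax⟩ :=
    s.toFinset.exists_max_image Complex.re (Multiset.toFinset_nonempty.mpr hs)
  refine ⟨z, Multiset.mem_toFinset.mp hz, ?_⟩
  rw [show s.sum.re = (s.map Complex.re).sum from map_multiset_sum Complex.reAddGroupHom s]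
  simpa using Multiset.sum_le_card_nsmul (s.map Complex.re) z.re (by simpa using hmax)

lemma Matrix.pow_mulVec_of_mulVec_eq_smul {ι R : Type*} [Fintype ι] [DecidableEq ι]
    [CommSemiring R] {A : Matrix ι ι R} {v : ι → R} {μ : R} (h : A *ᵥ v = μ • v) (k : ℕ) :
    (A ^ k) *ᵥ v = μ ^ k • v := by
  induction k with
  | zero => simp
  | succ k ih => rw [pow_succ, ← mulVec_mulVec, h, mulVec_smul, ih, smul_smul, ← pow_succ']

lemma Matrix.exists_mulVec_eq_smul_of_isRoot_charpoly {ι K : Type*} [Fintype ι] [DecidableEq ι]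
    [Field K] (N : Matrix ι ι K) {μ : K} (h : N.charpoly.IsRoot μ) :
    ∃ v ≠ 0, N *ᵥ v = μ • v := by
  obtain ⟨v, hv, hNv⟩ := exists_mulVec_eq_zero_iff.mpr (N.eval_charpoly μ ▸ h.eq_zero)
  refine ⟨v, hv, funext fun i => ?_⟩
  have := congr_fun hNv i
  simp only [sub_mulVec, scalar_apply, Pi.sub_apply, mulVec_diagonal, Pi.zero_apply,
    sub_eq_zero] at this
  simpa using this.symm

section Stochastic

variable {ι : Type*} [Fintype ι]

lemma Matrix.exists_isRoot_charpoly_trace_re_le [DecidableEq ι] {N : Matrix ι ι ℂ}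
    (hN : N.det = 0) :
    ∃ μ, N.charpoly.IsRoot μ ∧ N.trace.re ≤ (Fintype.card ι - 1) * μ.re := by
  set R := N.charpoly.roots
  have h0 : (0 : ℂ) ∈ R := Multiset.prod_eq_zero_iff.mp (N.det_eq_prod_roots_charpoly ▸ hN)
  have htr : N.trace = (R.erase 0).sum := by
    rw [trace_eq_sum_roots_charpoly, ← Multiset.sum_erase h0, zero_add]
  have hR : Multiset.card R = Fintype.card ι := by
    rw [(Polynomial.splits_iff_card_roots).mp (IsAlgClosed.splits _), charpoly_natDegree_eq_dim]
  have hcard : (Multiset.card (R.erase 0) : ℝ) = Fintype.card ι - 1 := by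
    rw [Multiset.card_erase_of_mem h0, hR, Nat.pred_eq_sub_one,
      Nat.cast_sub (hR ▸ Multiset.card_pos_iff_exists_mem.mpr ⟨0, h0⟩), Nat.cast_one]
  rcases eq_or_ne (R.erase 0) 0 with hR0 | hR0
  · exact ⟨0, Polynomial.isRoot_of_mem_roots h0, by simp [htr, hR0]⟩
  · obtain ⟨μ, hμ, hle⟩ := Multiset.exists_mem_sum_re_le_card_mul_re hR0
    exact ⟨μ, Polynomial.isRoot_of_mem_roots (Multiset.mem_of_mem_erase hμ),
      by rwa [htr, ← hcard]⟩

lemma Matrix.exists_eigenvector_dotProduct_eq_zero_of_one_lt_trace [DecidableEq ι]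
    {P : Matrix ι ι ℂ} {ν : ι → ℂ} (hrow : P *ᵥ 1 = 1) (hstat : ν ᵥ* P = ν)
    (hν : ∑ x, ν x = 1) (htr : 1 < P.trace.re) :
    ∃ μ : ℂ, ∃ v ≠ 0, P *ᵥ v = μ • v ∧ ν ⬝ᵥ v = 0 ∧
      P.trace.re - 1 ≤ (Fintype.card ι - 1) * μ.re := by
  have : Nonempty ι := by
    by_contra h
    rw [not_nonempty_iff] at h
    simp [trace] at htr
    linarith
  set N := P - vecMulVec 1 ν
  have hN1 : N *ᵥ 1 = 0 := by
    rw [sub_mulVec, vecMulVec_mulVec, hrow, dotProduct_one, hν, MulOpposite.op_one, one_smul,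
      sub_self]
  have hνN : ν ᵥ* N = 0 := by
    rw [vecMul_sub, vecMul_vecMulVec, hstat, dotProduct_one, hν, one_smul, sub_self]
  have htrN : N.trace.re = P.trace.re - 1 := by
    rw [trace_sub, trace_vecMulVec, one_dotProduct, hν, Complex.sub_re, Complex.one_re]
  obtain ⟨μ, hroot, hμ⟩ :=
    N.exists_isRoot_charpoly_trace_re_le (exists_mulVec_eq_zero_iff.mp ⟨1, one_ne_zero, hN1⟩)
  have hμ0 : μ ≠ 0 := by
    rintro rfl
    simp only [Complex.zero_re, mul_zero, htrN] at hμ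
    linarith
  obtain ⟨v, hv, hNv⟩ := N.exists_mulVec_eq_smul_of_isRoot_charpoly hroot
  -- `μ (ν ⬝ᵥ v) = ν ⬝ᵥ N v = (ν N) ⬝ᵥ v = 0`
  have hνv : ν ⬝ᵥ v = 0 := by
    have := dotProduct_mulVec ν N v
    rw [hNv, hνN, zero_dotProduct, dotProduct_smul, smul_eq_mul] at this
    exact (mul_eq_zero.mp this).resolve_left hμ0
  refine ⟨μ, v, hv, ?_, hνv, htrN ▸ hμ⟩
  have : P = N + vecMulVec 1 ν := by simp [N]
  rw [this, add_mulVec, hNv, vecMulVec_mulVec, hνv]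
  simp

lemma Matrix.norm_le_of_mulVec_eq_smul_of_sum_norm_sub_le {Q : Matrix ι ι ℂ} {ν v : ι → ℂ}
    {μ : ℂ} {δ : ℝ} (hv : v ≠ 0) (hνv : ν ⬝ᵥ v = 0) (hQv : Q *ᵥ v = μ • v)
    (hQ : ∀ x, ∑ y, ‖Q x y - ν y‖ ≤ δ) :
    ‖μ‖ ≤ δ := by
  obtain ⟨x, -, hx⟩ := Finset.univ.exists_max_image (fun y => ‖v y‖)
    (Finset.univ_nonempty_iff.mpr ⟨(Function.ne_iff.mp hv).choose⟩)
  have hvx : 0 < ‖v x‖ := by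
    obtain ⟨y, hy⟩ := Function.ne_iff.mp hv
    exact (norm_pos_iff.mpr hy).trans_le (hx y (Finset.mem_univ y))
  have heq : μ * v x = ∑ y, (Q x y - ν y) * v y := by
    have := congr_fun hQv x
    simp only [mulVec, dotProduct, Pi.smul_apply, smul_eq_mul] at this hνv
    simp [sub_mul, Finset.sum_sub_distrib, hνv, this]
  refine le_of_mul_le_mul_right ?_ hvx
  calc ‖μ‖ * ‖v x‖ = ‖∑ y, (Q x y - ν y) * v y‖ := by rw [← norm_mul, heq]
    _ ≤ ∑ y, ‖Q x y - ν y‖ * ‖v x‖ := (norm_sum_le _ _).trans <| Finset.sum_le_sum fun y _ => by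
          rw [norm_mul]; gcongr; exact hx y (Finset.mem_univ y)
    _ = (∑ y, ‖Q x y - ν y‖) * ‖v x‖ := Finset.sum_mul ..|>.symm
    _ ≤ δ * ‖v x‖ := by gcongr; exact hQ x

theorem Matrix.exists_trace_sub_one_le_of_abs_pow_sub_le [DecidableEq ι] {P : Matrix ι ι ℝ}
    {ν : ι → ℝ} (hrow : P *ᵥ 1 = 1) (hstat : ν ᵥ* P = ν) (hν : ∑ x, ν x = 1)
    (htr : 1 < P.trace) {t : ℕ} {δ : ℝ} (hmix : ∀ x, ∑ y, |(P ^ t) x y - ν y| ≤ δ) :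
    ∃ r : ℝ, P.trace - 1 ≤ (Fintype.card ι - 1) * r ∧ r ^ t ≤ δ := by
  obtain ⟨μ, v, hv, hPv, hνv, hμ⟩ := exists_eigenvector_dotProduct_eq_zero_of_one_lt_trace
    (P := P.map Complex.ofRealHom) (ν := Complex.ofRealHom ∘ ν)
    (funext fun x => by simpa [hrow] using (Complex.ofRealHom.map_mulVec P 1 x).symm)
    (funext fun y => by simpa [hstat] using (Complex.ofRealHom.map_vecMul P ν y).symm)
    (by simpa using congr_arg Complex.ofRealHom hν) (by simpa [trace] using htr)
  have : (1 : ℝ) ≤ Fintype.card ι := by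
    exact_mod_cast Fintype.card_pos_iff.mpr ⟨(Function.ne_iff.mp hv).choose⟩
  refine ⟨‖μ‖, ?_, ?_⟩
  · simpa [trace] using hμ.trans (by gcongr; exact Complex.re_le_norm μ)
  · rw [← norm_pow]
    refine norm_le_of_mulVec_eq_smul_of_sum_norm_sub_le hv hνv
      ((P.map Complex.ofRealHom).pow_mulVec_of_mulVec_eq_smul hPv t) fun x => ?_
    simpa [← Matrix.map_pow, ← Complex.ofReal_sub] using hmix x

end Stochastic

lemma sub_one_mul_log_one_div_le {κ r δ : ℝ} {t : ℕ} (hκ : 1 < κ) (hr : 1 - κ⁻¹ ≤ r)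
    (hδ : 0 < δ) (ht : r ^ t ≤ δ) : (κ - 1) * log (1 / δ) ≤ t := by
  have hr0 : 0 < r := lt_of_lt_of_le (by simpa using inv_lt_one_of_one_lt₀ hκ) hr
  have hlog : log (1 / δ) ≤ t * log (1 / r) := by
    rw [← log_pow, one_div, one_div, inv_pow]
    exact log_le_log (by positivity) (inv_anti₀ (by positivity) ht)
  have hlogr : (κ - 1) * log (1 / r) ≤ 1 := by
    have hκr : κ * (1 - r) ≤ 1 := by
      have := mul_le_mul_of_nonneg_left (show 1 - r ≤ κ⁻¹ by linarith) (by linarith : 0 ≤ κ)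
      rwa [mul_inv_cancel₀ (by linarith)] at this
    calc (κ - 1) * log (1 / r) ≤ (κ - 1) * (1 / r - 1) :=
          mul_le_mul_of_nonneg_left (log_le_sub_one_of_pos (by positivity)) (by linarith)
      _ ≤ 1 := by
          rw [div_sub_one hr0.ne', mul_div_assoc', div_le_one hr0]
          nlinarith
  nlinarith [t.cast_nonneg (α := ℝ)]

theorem pNCG_mixing_time_lower_bound_general
    {d : ℕ} {ι : Type*} [Fintype ι] [DecidableEq ι]
    (hcard : 2 ≤ Fintype.card ι)
    (emb : ι → (Fin d → ℝ)) (hemb : Function.Injective emb)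
    (p : ℝ) (hp : 1 ≤ p)
    -- gradient of the energy
    (gU : (Fin d → ℝ) → (Fin d → ℝ))
    -- the unadjusted p-NCG transition matrix with step size α
    (M : ℝ → Matrix ι ι ℝ)
    (hM : ∀ (α : ℝ) (x y : ι), M α x y =
      exp (-(1/2) * (gU (emb x) ⬝ᵥ (emb y - emb x))
          - (1/(2*α)) * pNormPow p (emb y - emb x))
      / ∑ y' : ι, exp (-(1/2) * (gU (emb x) ⬝ᵥ (emb y' - emb x))
          - (1/(2*α)) * pNormPow p (emb y' - emb x)))
    -- the stationary distribution of the chain with step size α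
    (pialpha : ℝ → ι → ℝ)
    (hpialpha : ∀ α, (∀ x, 0 ≤ pialpha α x) ∧ (∑ x, pialpha α x = 1) ∧
      ∀ x, pialpha α x = ∑ y, pialpha α y * M α y x) :
    ∃ c₁ c₂ Z : ℝ, 0 < c₁ ∧ 0 < c₂ ∧ 0 < Z ∧
      ∀ α : ℝ, 0 < α → ∀ ε : ℝ, 0 < ε → ε < 1/2 →
        ∀ t : ℕ, (∀ x : ι, (1/2) * ∑ y, |((M α) ^ t) x y - pialpha α y| ≤ ε) →
          (c₁ / Z * exp (c₂ / (2 * α)) - 1) * Real.log (1 / (2 * ε)) ≤ (t : ℝ) := by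
  have : Nonempty ι := Fintype.card_pos_iff.mp (by omega)
  obtain ⟨c, hc, hcle⟩ := Finite.exists_pos_le_of_ne (fun x y : ι => pNormPow p (emb y - emb x))
    fun x y hxy => pNormPow_pos p (sub_ne_zero.mpr (hemb.ne hxy.symm))
  obtain ⟨β, hβ⟩ := (Set.finite_range fun q : ι × ι =>
    -(1/2) * (gU (emb q.1) ⬝ᵥ (emb q.2 - emb q.1))).bddAbove
  have hn : (2 : ℝ) ≤ Fintype.card ι := by exact_mod_cast hcard
  set n : ℝ := (Fintype.card ι : ℝ)
  refine ⟨1, c, n * exp β, one_pos, hc, by positivity, fun α hα ε hε hε2 t hmix => ?_⟩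
  set κ := 1 / (n * exp β) * exp (c / (2 * α))
  set η := exp (β - c / (2 * α))
  rcases le_or_gt κ 1 with hκ | hκ
  · exact (mul_nonpos_of_nonpos_of_nonneg (by linarith)
      (log_nonneg (by rw [le_div_iff₀ (by linarith)]; linarith))).trans t.cast_nonneg
  have hκη : κ⁻¹ = n * η := by
    simp only [κ, η, exp_sub]
    field_simp
  obtain ⟨-, hπ, hstat⟩ := hpialpha α
  have hrow : M α *ᵥ 1 = 1 := funext fun x => by
    simpa only [mulVec, dotProduct, Pi.one_apply, mul_one, hM] using sum_exp_div_sum_exp _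
  have hdiag : ∀ x, 1 - (n - 1) * η ≤ M α x x := fun x => by
    rw [hM]
    exact one_sub_mul_exp_le_pNCG_diag (by linarith) hα (fun y hyx => hcle x y hyx.symm)
      fun y => hβ ⟨(x, y), rfl⟩
  have htr : n * (1 - (n - 1) * η) ≤ (M α).trace := by
    simpa [trace, n] using Finset.card_nsmul_le_sum Finset.univ _ _ fun x _ => hdiag x
  have hnη : n * η < 1 := hκη ▸ inv_lt_one_of_one_lt₀ hκ
  obtain ⟨r, hr, hrt⟩ := (M α).exists_trace_sub_one_le_of_abs_pow_sub_le hrow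
    (funext fun x => (hstat x).symm) hπ (by nlinarith) (t := t) (δ := 2 * ε)
    fun x => by linarith [hmix x]
  refine sub_one_mul_log_one_div_le hκ ?_ (by linarith) hrt
  rw [hκη]
  nlinarith

/-- Mixing-time lower bound for the unadjusted p-NCG chain on a discrete log-quadratic
distribution over at least two distinct points: there exist constants `c₁, c₂, Z > 0`
depending only on the distribution with
`t_mix(ε) ≥ ((c₁/Z) exp(c₂/(2α)) − 1) log(1/(2ε))` for all `ε ∈ (0, 1/2)` and `α > 0`;
in particular, the mixing time grows exponentially as `α → 0⁺`. -/
theorem pNCG_mixing_time_lower_bound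
    {d : ℕ} [NeZero d] {ι : Type*} [Fintype ι] [DecidableEq ι]
    (hcard : 2 ≤ Fintype.card ι)
    (emb : ι → (Fin d → ℝ)) (hemb : Function.Injective emb)
    (A : Matrix (Fin d) (Fin d) ℝ) (hA : A.IsHermitian) (b : Fin d → ℝ)
    (p : ℝ) (hp : 1 ≤ p)
    (U : (Fin d → ℝ) → ℝ)
    (hU : ∀ v, U v = -(v ⬝ᵥ A.mulVec v) - b ⬝ᵥ v)
    (hUnonpos : ∀ x : ι, U (emb x) ≤ 0)
    -- gradient of the energy
    (gU : (Fin d → ℝ) → (Fin d → ℝ))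
    (hgU : ∀ v, gU v = -((2 : ℝ) • A.mulVec v) - b)
    -- the unadjusted p-NCG transition matrix with step size α
    (M : ℝ → Matrix ι ι ℝ)
    (hM : ∀ (α : ℝ) (x y : ι), M α x y =
      exp (-(1/2) * (gU (emb x) ⬝ᵥ (emb y - emb x))
          - (1/(2*α)) * pNormPow p (emb y - emb x))
      / ∑ y' : ι, exp (-(1/2) * (gU (emb x) ⬝ᵥ (emb y' - emb x))
          - (1/(2*α)) * pNormPow p (emb y' - emb x)))
    -- the stationary distribution of the chain with step size α
    (pialpha : ℝ → ι → ℝ)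
    (hpialpha : ∀ α, (∀ x, 0 ≤ pialpha α x) ∧ (∑ x, pialpha α x = 1) ∧
      ∀ x, pialpha α x = ∑ y, pialpha α y * M α y x) :
    ∃ c₁ c₂ Z : ℝ, 0 < c₁ ∧ 0 < c₂ ∧ 0 < Z ∧
      ∀ α : ℝ, 0 < α → ∀ ε : ℝ, 0 < ε → ε < 1/2 →
        ∀ t : ℕ, (∀ x : ι, (1/2) * ∑ y, |((M α) ^ t) x y - pialpha α y| ≤ ε) →
          (c₁ / Z * exp (c₂ / (2 * α)) - 1) * Real.log (1 / (2 * ε)) ≤ (t : ℝ) :=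
  pNCG_mixing_time_lower_bound_general hcard emb hemb p hp gU M hM pialpha hpialpha

end
end
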